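/- For the ECA rule 162, with local rule h(a,b,c) = (a ∨ ¬b) ∧ c, and for every n ≥ 3: the number of distinct asynchronous global functions, i.e. the cardinality of { f^{(τ)} : τ a block-sequential update schedule on ℤ/nℤ }, equals 3^n − 2^{n+1} − n + 2. -/

import Mathlib

/-- One round of a block-sequential update: all cells of rank `k` are updated
simultaneously by the ECA local rule `h`, reading the current states. -/
def ecaStep (n : ℕ) (h : Bool → Bool → Bool → Bool) (τ : ZMod n → ℕ) (k : ℕ)
    (x : ZMod n → Bool) : ZMod n → Bool :=
  fun i => if τ i = k then h (x (i - 1)) (x i) (x (i + 1)) else x i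

/-- State after processing ranks `0, 1, …, k` in increasing order. -/
def ecaUpTo (n : ℕ) (h : Bool → Bool → Bool → Bool) (τ : ZMod n → ℕ) :
    ℕ → (ZMod n → Bool) → ZMod n → Bool
  | 0 => ecaStep n h τ 0
  | k + 1 => fun x => ecaStep n h τ (k + 1) (ecaUpTo n h τ k x)

/-- Asynchronous global function `f^{(τ)}` for the block-sequential update
schedule `τ : ZMod n → ℕ` (rank of each cell): a cell keeps the value it gets
in the round where it is updated (it is never updated again afterwards). -/
def ecaAsync (n : ℕ) (h : Bool → Bool → Bool → Bool) (τ : ZMod n → ℕ)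
    (x : ZMod n → Bool) : ZMod n → Bool :=
  fun i => ecaUpTo n h τ (τ i) x i

/-- Synchronous global function of the ECA with local rule `h`. -/
def ecaSync (n : ℕ) (h : Bool → Bool → Bool → Bool) (x : ZMod n → Bool) :
    ZMod n → Bool :=
  fun i => h (x (i - 1)) (x i) (x (i + 1))

/-- Label of the arc `(i, j)` for schedule `τ`:
`true` = ⊕ (τ i ≥ τ j), `false` = ⊖ (τ i < τ j). -/
def lab (n : ℕ) (τ : ZMod n → ℕ) (i j : ZMod n) : Bool :=
  decide (τ j ≤ τ i)


/-!
Cell `i` is updated after its neighbour `i ± 1` exactly when that neighbour has a smaller rank, so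
`f^{(τ)}` depends only on the orientation `σ` of the `n` edges of the cycle obtained by comparing
the ranks at their ends. The orientations that occur are those with an ascent iff they have a
descent; there are `3^n - 2^{n+1} + 2` of them. For rule 162 the new state of cell `i` unrolls to a
formula in the lengths of the run of ascents ending at `i` and of the run of descents starting at
`i`. Probing with configurations that have a single `false` recovers `σ` from `f^{(τ)}`, with one
exception: ascents at `k`, `k + 1` and descents elsewhere give the same function as the orientation
in which the ascent at `k + 1` is replaced by a tie. These `n` coincidences are the only ones.
-/

namespace Rule162

variable {n : ℕ}

section Async

variable (h : Bool → Bool → Bool → Bool) (τ : ZMod n → ℕ) (x : ZMod n → Bool)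

theorem ecaUpTo_apply (k : ℕ) (j : ZMod n) :
    ecaUpTo n h τ k x j = if τ j ≤ k then ecaAsync n h τ x j else x j := by
  induction k with
  | zero =>
    by_cases hj : τ j = 0 <;> simp [ecaUpTo, ecaStep, ecaAsync, hj]
  | succ k ih =>
    by_cases hj : τ j = k + 1
    · simp [ecaAsync, hj]
    · simp only [ecaUpTo, ecaStep, if_neg hj, ih]
      grind

theorem ecaAsync_apply (i : ZMod n) :
    ecaAsync n h τ x i =
      h (if τ (i - 1) < τ i then ecaAsync n h τ x (i - 1) else x (i - 1)) (x i)
        (if τ (i + 1) < τ i then ecaAsync n h τ x (i + 1) else x (i + 1)) := by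
  change ecaUpTo n h τ (τ i) x i = _
  rcases hi : τ i with _ | k
  · simp [ecaUpTo, ecaStep, hi]
  · simp [ecaUpTo, ecaStep, hi, ecaUpTo_apply]

end Async

def rule : Bool → Bool → Bool → Bool := fun a b c => (a || !b) && c

def orientation (τ : ZMod n → ℕ) (e : ZMod n) : Ordering := compare (τ e) (τ (e + 1))

theorem orientation_eq_lt {τ : ZMod n → ℕ} {e : ZMod n} :
    orientation τ e = .lt ↔ τ e < τ (e + 1) := compare_lt_iff_lt

theorem orientation_eq_gt {τ : ZMod n → ℕ} {e : ZMod n} :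
    orientation τ e = .gt ↔ τ (e + 1) < τ e := compare_gt_iff_gt

/-- `leftFactor x i l = x (i - l - 1) || !x (i - l) || ⋯ || !x i` -/
def leftFactor (x : ZMod n → Bool) : ZMod n → ℕ → Bool
  | i, 0 => x (i - 1) || !x i
  | i, l + 1 => leftFactor x (i - 1) l || !x i

/-- `rightFactor x i r = (x i || !x (i + 1)) && ⋯ && (x (i + r - 1) || !x (i + r)) && x (i + r + 1)`
-/
def rightFactor (x : ZMod n → Bool) : ZMod n → ℕ → Bool
  | i, 0 => x (i + 1)
  | i, r + 1 => (x i || !x (i + 1)) && rightFactor x (i + 1) r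

section ClosedForm

variable (τ : ZMod n → ℕ) (x : ZMod n → Bool)

theorem leftInput_eq_leftFactor : ∀ (l : ℕ) (i : ZMod n),
    (∀ j < l, orientation τ (i - 1 - j) = .lt) → orientation τ (i - 1 - l) ≠ .lt →
    ((if τ (i - 1) < τ i then ecaAsync n rule τ x (i - 1) else x (i - 1)) || !x i) =
      leftFactor x i l
  | 0, i, _, hl' => by
    rw [if_neg (by simpa [orientation_eq_lt] using hl')]
    rfl
  | l + 1, i, hl, hl' => by
    have hlt : τ (i - 1) < τ i := by simpa [orientation_eq_lt] using hl 0 l.succ_pos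
    have ih := leftInput_eq_leftFactor l (i - 1)
      (fun j hj => by convert hl (j + 1) (by omega) using 2; push_cast; ring)
      fun h => hl' (by convert h using 2; push_cast; ring)
    rw [if_pos hlt, ecaAsync_apply, sub_add_cancel, if_neg hlt.asymm, leftFactor, ← ih]
    cases x i <;> simp [rule]

theorem rightInput_eq_rightFactor : ∀ (r : ℕ) (i : ZMod n),
    (∀ j < r, orientation τ (i + j) = .gt) → orientation τ (i + r) ≠ .gt →
    (if τ (i + 1) < τ i then ecaAsync n rule τ x (i + 1) else x (i + 1)) = rightFactor x i r
  | 0, i, _, hr' => by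
    rw [if_neg (by simpa [orientation_eq_gt] using hr')]
    rfl
  | r + 1, i, hr, hr' => by
    have hlt : τ (i + 1) < τ i := by simpa [orientation_eq_gt] using hr 0 r.succ_pos
    have ih := rightInput_eq_rightFactor r (i + 1)
      (fun j hj => by convert hr (j + 1) (by omega) using 2; push_cast; ring)
      fun h => hr' (by convert h using 2; push_cast; ring)
    rw [if_pos hlt, ecaAsync_apply, add_sub_cancel_right, if_neg hlt.asymm, ih]
    rfl

theorem ecaAsync_rule_apply {i : ZMod n} {l r : ℕ}
    (hl : ∀ j < l, orientation τ (i - 1 - j) = .lt) (hl' : orientation τ (i - 1 - l) ≠ .lt)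
    (hr : ∀ j < r, orientation τ (i + j) = .gt) (hr' : orientation τ (i + r) ≠ .gt) :
    ecaAsync n rule τ x i = (leftFactor x i l && rightFactor x i r) := by
  rw [ecaAsync_apply, ← leftInput_eq_leftFactor τ x l i hl hl',
    ← rightInput_eq_rightFactor τ x r i hr hr']
  rfl

end ClosedForm

theorem natCast_sub_of_le {k : ℕ} (hk : k ≤ n) : ((n - k : ℕ) : ZMod n) = -k := by
  rw [Nat.cast_sub hk, ZMod.natCast_self, zero_sub]

theorem add_natCast_ne_self {c : ℕ} (h0 : 0 < c) (hc : c < n) (i : ZMod n) : i + c ≠ i := by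
  rw [Ne, add_eq_left, ZMod.natCast_eq_zero_iff]
  exact fun hdvd => (Nat.le_of_dvd h0 hdvd).not_gt hc

theorem add_one_ne_self (hn : 2 ≤ n) (i : ZMod n) : i + 1 ≠ i := by
  simpa using add_natCast_ne_self (c := 1) one_pos (by omega) i

theorem sub_one_ne_self (hn : 2 ≤ n) (i : ZMod n) : i - 1 ≠ i :=
  fun h => add_one_ne_self hn (i - 1) (by linear_combination -h)

theorem add_two_ne_self (hn : 3 ≤ n) (i : ZMod n) : i + 2 ≠ i := by
  simpa using add_natCast_ne_self (c := 2) two_pos (by omega) i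

theorem add_two_ne_add_one (hn : 2 ≤ n) (i : ZMod n) : i + 2 ≠ i + 1 :=
  fun h => add_one_ne_self (by omega) (i + 1) (by linear_combination h)

theorem add_one_ne_sub_one (hn : 3 ≤ n) (i : ZMod n) : i + 1 ≠ i - 1 :=
  fun h => add_two_ne_self hn (i - 1) (by linear_combination h)

section Cycle

variable [NeZero n]

theorem exists_lt_eq_add (a d : ZMod n) : ∃ j < n, d = a + j :=
  ⟨(d - a).val, ZMod.val_lt _, by rw [ZMod.natCast_zmod_val]; ring⟩

theorem eq_of_forall_le_add_one {α : Type*} [PartialOrder α] {f : ZMod n → α}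
    (hf : ∀ e, f (e + 1) ≤ f e) (e : ZMod n) : f (e + 1) = f e := by
  have hle : ∀ (a : ZMod n) (k : ℕ), f (a + k) ≤ f a := by
    intro a k
    induction k with
    | zero => simp
    | succ k ih => rw [Nat.cast_succ, ← add_assoc]; exact (hf _).trans ih
  refine le_antisymm (hf e) ?_
  simpa [natCast_sub_of_le NeZero.one_le] using hle (e + 1) (n - 1)

end Cycle

/-- The orientations of the edges of the cycle that come from a schedule. -/
def feasible (n : ℕ) : Set (ZMod n → Ordering) :=
  {σ | (∃ e, σ e = .lt) ↔ ∃ e, σ e = .gt}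

theorem orientation_mem_feasible [NeZero n] (τ : ZMod n → ℕ) : orientation τ ∈ feasible n := by
  simp only [feasible, Set.mem_ofPred_eq, orientation_eq_lt, orientation_eq_gt]
  constructor
  · rintro ⟨a, ha⟩
    by_contra! h
    exact ha.ne' (eq_of_forall_le_add_one (f := OrderDual.toDual ∘ τ) h a)
  · rintro ⟨b, hb⟩
    by_contra! h
    exact hb.ne (eq_of_forall_le_add_one h b)

theorem exists_path_ranks (ε : ℕ → Ordering) (N : ℕ) :
    ∃ T : ℕ → ℕ, (∀ p < N, compare (T p) (T (p + 1)) = ε p) ∧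
      ((∃ p < N, ε p = .lt) → T 0 < T N) := by
  -- an ascent raises the rank by more than all descents together can lower it
  set T : ℕ → ℕ := fun p => (N + 1) * Nat.count (ε · = .lt) p + (N - Nat.count (ε · = .gt) p)
  refine ⟨T, fun p hp => ?_, fun ⟨p, hp, hlt⟩ => ?_⟩
  · have hcount := Nat.count_le (ε · = .gt) (n := p)
    cases h : ε p
    · rw [compare_lt_iff_lt]
      simp [T, Nat.count_succ, h, mul_add]
    · rw [compare_eq_iff_eq]
      simp [T, Nat.count_succ, h]
    · rw [compare_gt_iff_gt]
      simp [T, Nat.count_succ, h]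
      omega
  · have hpos : 1 ≤ Nat.count (ε · = .lt) N :=
      (Nat.one_le_of_lt (Nat.count_lt_count_succ_iff.mpr hlt)).trans
        (Nat.count_monotone _ (Nat.succ_le_of_lt hp))
    have : N + 1 ≤ (N + 1) * Nat.count (ε · = .lt) N := Nat.le_mul_of_pos_right _ hpos
    simp only [T, Nat.count_zero]
    omega

theorem exists_orientation_eq [NeZero n] {σ : ZMod n → Ordering} (hσ : σ ∈ feasible n) :
    ∃ τ : ZMod n → ℕ, orientation τ = σ := by
  by_cases hlt : ∃ e, σ e = .lt
  · obtain ⟨a, ha⟩ := hlt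
    obtain ⟨b, hb⟩ := hσ.mp ⟨a, ha⟩
    -- rank the cells along the path `b + 1, b + 2, …, b` that cuts the cycle at the edge `b`
    obtain ⟨T, hT, hTb⟩ := exists_path_ranks (fun p => σ (b + 1 + p)) (n - 1)
    refine ⟨fun i => T (i - (b + 1)).val, funext fun e => ?_⟩
    have hval : ∀ p < n, ((b + 1 + p - (b + 1) : ZMod n)).val = p := fun p hp => by
      rw [add_sub_cancel_left, ZMod.val_natCast_of_lt hp]
    obtain ⟨p, hp, rfl⟩ := exists_lt_eq_add (b + 1) e
    rcases Nat.lt_or_ge p (n - 1) with hp' | hp'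
    · have hsucc : b + 1 + (p : ZMod n) + 1 = b + 1 + ((p + 1 : ℕ) : ZMod n) := by
        push_cast; ring
      rw [orientation, hsucc, hval p hp, hval (p + 1) (by omega), hT p hp']
    · obtain rfl : p = n - 1 := by omega
      have hpb : b + 1 + ((n - 1 : ℕ) : ZMod n) = b := by
        rw [natCast_sub_of_le NeZero.one_le]; ring
      obtain ⟨q, hq, rfl⟩ := exists_lt_eq_add (b + 1) a
      have hq' : q < n - 1 := by
        refine lt_of_le_of_ne (by omega) fun hq' => ?_
        rw [hq', hpb] at ha
        simp [ha] at hb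
      have hsucc : b + 1 + ((n - 1 : ℕ) : ZMod n) + 1 = b + 1 + ((0 : ℕ) : ZMod n) := by
        rw [hpb]; simp
      rw [orientation, hsucc, hval _ hp, hval 0 (NeZero.pos n), hpb, hb, compare_gt_iff_gt]
      exact hTb ⟨q, hq', ha⟩
  · refine ⟨fun _ => 0, funext fun e => ?_⟩
    push Not at hlt
    have hgt : σ e ≠ .gt := fun h => hlt _ (hσ.mpr ⟨e, h⟩).choose_spec
    cases h : σ e <;> simp_all [orientation]

-- Junk value: `sInf ∅ = 0`, so the runs below only mean what their names say for `σ ∈ feasible n`.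
noncomputable def leftRun (σ : ZMod n → Ordering) (i : ZMod n) : ℕ :=
  sInf {m : ℕ | σ (i - 1 - m) ≠ .lt}

noncomputable def rightRun (σ : ZMod n → Ordering) (i : ZMod n) : ℕ :=
  sInf {m : ℕ | σ (i + m) ≠ .gt}

section Runs

variable {σ : ZMod n → Ordering}

theorem eq_lt_of_lt_leftRun {i : ZMod n} {j : ℕ} (hj : j < leftRun σ i) : σ (i - 1 - j) = .lt :=
  not_not.mp (Nat.notMem_of_lt_sInf hj)

theorem eq_gt_of_lt_rightRun {i : ZMod n} {j : ℕ} (hj : j < rightRun σ i) : σ (i + j) = .gt :=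
  not_not.mp (Nat.notMem_of_lt_sInf hj)

theorem leftRun_eq {i : ZMod n} {m : ℕ} (hlt : ∀ j < m, σ (i - 1 - j) = .lt)
    (hm : σ (i - 1 - m) ≠ .lt) : leftRun σ i = m :=
  le_antisymm (Nat.sInf_le hm) <| not_lt.mp fun h =>
    Nat.sInf_mem (s := {m : ℕ | σ (i - 1 - m) ≠ .lt}) ⟨m, hm⟩ (hlt _ h)

theorem rightRun_eq {i : ZMod n} {m : ℕ} (hgt : ∀ j < m, σ (i + j) = .gt)
    (hm : σ (i + m) ≠ .gt) : rightRun σ i = m :=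
  le_antisymm (Nat.sInf_le hm) <| not_lt.mp fun h =>
    Nat.sInf_mem (s := {m : ℕ | σ (i + m) ≠ .gt}) ⟨m, hm⟩ (hgt _ h)

theorem rightRun_congr {σ' : ZMod n → Ordering} (h : ∀ e, σ e = .gt ↔ σ' e = .gt) :
    rightRun σ = rightRun σ' := by
  ext i
  simp only [rightRun, ne_eq, h]

variable [NeZero n] (hσ : σ ∈ feasible n) (i : ZMod n)
include hσ

theorem exists_ne_lt_of_mem_feasible : ∃ e, σ e ≠ .lt := by
  by_contra! h
  obtain ⟨b, hb⟩ := hσ.mp ⟨0, h 0⟩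
  simp [h b] at hb

theorem exists_ne_gt_of_mem_feasible : ∃ e, σ e ≠ .gt := by
  by_contra! h
  obtain ⟨a, ha⟩ := hσ.mpr ⟨0, h 0⟩
  simp [h a] at ha

theorem leftRun_ne_lt : σ (i - 1 - leftRun σ i) ≠ .lt := by
  obtain ⟨e, he⟩ := exists_ne_lt_of_mem_feasible hσ
  refine Nat.sInf_mem (s := {m : ℕ | σ (i - 1 - m) ≠ .lt}) ⟨(i - 1 - e).val, ?_⟩
  simpa [ZMod.natCast_zmod_val] using he

theorem rightRun_ne_gt : σ (i + rightRun σ i) ≠ .gt := by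
  obtain ⟨e, he⟩ := exists_ne_gt_of_mem_feasible hσ
  refine Nat.sInf_mem (s := {m : ℕ | σ (i + m) ≠ .gt}) ⟨(e - i).val, ?_⟩
  simpa [ZMod.natCast_zmod_val] using he

theorem rightRun_lt : rightRun σ i < n := by
  obtain ⟨e, he⟩ := exists_ne_gt_of_mem_feasible hσ
  refine (Nat.sInf_le (m := (e - i).val) ?_).trans_lt (ZMod.val_lt _)
  simpa [ZMod.natCast_zmod_val] using he

theorem leftRun_eq_zero_iff : leftRun σ i = 0 ↔ σ (i - 1) ≠ .lt := by
  refine ⟨fun h => by simpa [h] using leftRun_ne_lt hσ i, fun h => leftRun_eq (by simp) ?_⟩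
  simpa using h

theorem rightRun_eq_zero_iff : rightRun σ i = 0 ↔ σ i ≠ .gt := by
  refine ⟨fun h => by simpa [h] using rightRun_ne_gt hσ i, fun h => rightRun_eq (by simp) ?_⟩
  simpa using h

end Runs

noncomputable def asyncMap (σ : ZMod n → Ordering) (x : ZMod n → Bool) (i : ZMod n) : Bool :=
  leftFactor x i (leftRun σ i) && rightFactor x i (rightRun σ i)

theorem ecaAsync_eq_asyncMap [NeZero n] (τ : ZMod n → ℕ) :
    ecaAsync n rule τ = asyncMap (orientation τ) := by
  have hσ := orientation_mem_feasible τ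
  funext x i
  exact ecaAsync_rule_apply τ x (fun _ => eq_lt_of_lt_leftRun) (leftRun_ne_lt hσ i)
    (fun _ => eq_gt_of_lt_rightRun) (rightRun_ne_gt hσ i)

theorem setOf_ecaAsync_eq_image [NeZero n] :
    {g | ∃ τ : ZMod n → ℕ, g = ecaAsync n rule τ} = asyncMap '' feasible n := by
  ext g
  constructor
  · rintro ⟨τ, rfl⟩
    exact ⟨_, orientation_mem_feasible τ, (ecaAsync_eq_asyncMap τ).symm⟩
  · rintro ⟨σ, hσ, rfl⟩
    obtain ⟨τ, rfl⟩ := exists_orientation_eq hσ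
    exact ⟨τ, (ecaAsync_eq_asyncMap τ).symm⟩

theorem rightFactor_eq_true_iff (x : ZMod n → Bool) : ∀ (r : ℕ) (i : ZMod n),
    rightFactor x i r = true ↔
      (∀ j < r, x (i + j + 1) = true → x (i + j) = true) ∧ x (i + r + 1) = true
  | 0, i => by simp [rightFactor]
  | r + 1, i => by
    have hshift : ∀ j : ℕ, i + 1 + j = i + ((j + 1 : ℕ) : ZMod n) := fun j => by push_cast; ring
    simp only [rightFactor, Bool.and_eq_true, rightFactor_eq_true_iff x r (i + 1),
      Nat.forall_lt_succ_left', hshift, Nat.cast_zero, add_zero]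
    cases x i <;> cases x (i + 1) <;> simp

theorem leftFactor_of_eq_false {x : ZMod n → Bool} {i : ZMod n} (hx : x i = false) (l : ℕ) :
    leftFactor x i l = true := by
  cases l <;> simp [leftFactor, hx]

def hole (p j : ZMod n) : Bool := decide (j ≠ p)

section Probes

variable {σ : ZMod n → Ordering} [NeZero n] (hσ : σ ∈ feasible n)
include hσ

theorem asyncMap_hole_self (hn : 2 ≤ n) (i : ZMod n) :
    asyncMap σ (hole i) i = decide (σ i ≠ .gt) := by
  have hright : ∀ r, rightFactor (hole i) i r = decide (r = 0) := by
    rintro (_ | r) <;> simp [rightFactor, hole, add_one_ne_self hn]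
  rw [asyncMap, leftFactor_of_eq_false (by simp [hole]), hright, Bool.true_and]
  exact decide_eq_decide.mpr (rightRun_eq_zero_iff hσ i)

theorem asyncMap_hole_add_one (hn : 2 ≤ n) (e : ZMod n) :
    asyncMap σ (hole e) (e + 1) =
      (decide (σ e = .lt) && rightFactor (hole e) (e + 1) (rightRun σ (e + 1))) := by
  have hleft : ∀ l, leftFactor (hole e) (e + 1) l = decide (l ≠ 0) := by
    rintro (_ | l)
    · simp [leftFactor, hole, add_one_ne_self hn]
    · simp [leftFactor, leftFactor_of_eq_false (x := hole e) (i := e) (by simp [hole])]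
  have hzero := leftRun_eq_zero_iff hσ (e + 1)
  rw [add_sub_cancel_right] at hzero
  rw [asyncMap, hleft]
  congr 1
  simp [hzero]

end Probes

theorem ordering_eq_of_iff {o o' : Ordering} (hlt : o = .lt ↔ o' = .lt)
    (hgt : o = .gt ↔ o' = .gt) : o = o' := by
  cases o <;> cases o' <;> simp_all

section Injectivity

variable [NeZero n] {σ σ' : ZMod n → Ordering} (hσ : σ ∈ feasible n) (hσ' : σ' ∈ feasible n)
include hσ hσ'

theorem gt_iff_of_asyncMap_eq (hn : 2 ≤ n) (h : asyncMap σ = asyncMap σ') (e : ZMod n) :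
    σ e = .gt ↔ σ' e = .gt := by
  have := congrFun (congrFun h (hole e)) e
  rw [asyncMap_hole_self hσ hn, asyncMap_hole_self hσ' hn, decide_eq_decide] at this
  exact not_iff_not.mp this

/-- The probe `hole e` at cell `e + 1` detects whether the edge `e` is `lt`, unless the `gt` run
to the right of `e + 1` wraps around to the hole. -/
theorem lt_iff_of_asyncMap_eq (hn : 2 ≤ n) (h : asyncMap σ = asyncMap σ') {e : ZMod n}
    (hright : rightFactor (hole e) (e + 1) (rightRun σ (e + 1)) = true) :
    σ e = .lt ↔ σ' e = .lt := by
  have := congrFun (congrFun h (hole e)) (e + 1)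
  rw [asyncMap_hole_add_one hσ hn, asyncMap_hole_add_one hσ' hn,
    ← rightRun_congr (gt_iff_of_asyncMap_eq hσ hσ' hn h), hright] at this
  simpa using this

end Injectivity

theorem forall_gt_of_rightFactor_hole_eq_false [NeZero n] (hn : 2 ≤ n) {σ : ZMod n → Ordering}
    (hσ : σ ∈ feasible n) {e : ZMod n} (he : σ e ≠ .gt)
    (hright : rightFactor (hole e) (e + 1) (rightRun σ (e + 1)) = false) :
    ∀ d, d ≠ e - 1 → d ≠ e → σ d = .gt := by
  set r := rightRun σ (e + 1)
  have hwrap : e + 1 + r + 1 = e := by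
    by_contra hwrap
    rw [← Bool.not_eq_true, rightFactor_eq_true_iff] at hright
    refine hright ⟨fun j hj _ => ?_, by simp [hole, hwrap]⟩
    simp only [hole, decide_eq_true_eq]
    exact fun hj' => he (hj' ▸ eq_gt_of_lt_rightRun hj)
  have hr : r + 2 = n := by
    have h0 : ((r + 2 : ℕ) : ZMod n) = 0 := by
      push_cast
      linear_combination hwrap
    obtain ⟨c, hc⟩ := (ZMod.natCast_eq_zero_iff _ _).mp h0
    have hlt : r < n := rightRun_lt hσ (e + 1)
    rcases c with _ | _ | c
    · omega
    · omega
    · nlinarith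
  intro d hd1 hd2
  obtain ⟨j, hj, rfl⟩ := exists_lt_eq_add (e + 1) d
  refine eq_gt_of_lt_rightRun (lt_of_not_ge fun hrj => ?_)
  obtain rfl | rfl : j = n - 2 ∨ j = n - 1 := by omega
  · exact hd1 (by rw [natCast_sub_of_le (by omega)]; push_cast; ring)
  · exact hd2 (by rw [natCast_sub_of_le (by omega)]; push_cast; ring)

def ascAsc (k e : ZMod n) : Ordering := if e = k ∨ e = k + 1 then .lt else .gt

def ascFlat (k e : ZMod n) : Ordering := if e = k then .lt else if e = k + 1 then .eq else .gt

theorem eq_ascAsc_of_lt_of_eq [NeZero n] (hn : 3 ≤ n) {σ σ' : ZMod n → Ordering}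
    (hσ' : σ' ∈ feasible n) {e : ZMod n}
    (hrest : ∀ d, d ≠ e - 1 → d ≠ e → σ d = .gt ∧ σ' d = .gt) (hprev : σ (e - 1) = σ' (e - 1))
    (he : σ e = .lt) (he' : σ' e = .eq) : σ = ascAsc (e - 1) := by
  obtain ⟨a, ha⟩ :=
    hσ'.mpr ⟨e + 1, (hrest _ (add_one_ne_sub_one hn e) (add_one_ne_self (by omega) e)).2⟩
  have hae : a ≠ e := by rintro rfl; simp [he'] at ha
  obtain rfl : a = e - 1 := by
    by_contra hae'
    simp [(hrest a hae' hae).2] at ha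
  funext d
  by_cases hd1 : d = e - 1
  · simp [ascAsc, hd1, hprev, ha]
  by_cases hd2 : d = e
  · simp [ascAsc, hd2, he]
  simp [ascAsc, hd1, hd2, (hrest d hd1 hd2).1]

theorem eq_of_asyncMap_eq [NeZero n] (hn : 3 ≤ n) {σ σ' : ZMod n → Ordering}
    (hσ : σ ∈ feasible n) (hσ' : σ' ∈ feasible n) (hA : σ ∉ Set.range ascAsc)
    (hA' : σ' ∉ Set.range ascAsc) (h : asyncMap σ = asyncMap σ') : σ = σ' := by
  by_contra hne
  obtain ⟨e, he⟩ := Function.ne_iff.mp hne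
  have hgt := gt_iff_of_asyncMap_eq hσ hσ' (by omega) h
  have hegt : σ e ≠ .gt := fun h1 => he (h1.trans ((hgt e).mp h1).symm)
  have hegt' : σ' e ≠ .gt := fun h1 => hegt ((hgt e).mpr h1)
  have hright : rightFactor (hole e) (e + 1) (rightRun σ (e + 1)) = false := by
    by_contra hright
    exact he (ordering_eq_of_iff
      (lt_iff_of_asyncMap_eq hσ hσ' (by omega) h (by simpa using hright)) (hgt e))
  have hrest : ∀ d, d ≠ e - 1 → d ≠ e → σ d = .gt ∧ σ' d = .gt := fun d hd1 hd2 =>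
    have hd := forall_gt_of_rightFactor_hole_eq_false (by omega) hσ hegt hright d hd1 hd2
    ⟨hd, (hgt d).mp hd⟩
  have hprev : σ (e - 1) = σ' (e - 1) := by
    refine ordering_eq_of_iff (lt_iff_of_asyncMap_eq hσ hσ' (by omega) h ?_) (hgt _)
    simp [(rightRun_eq_zero_iff hσ e).mpr hegt, rightFactor, hole, add_one_ne_sub_one hn]
  have hcases : (σ e = .lt ∧ σ' e = .eq) ∨ (σ e = .eq ∧ σ' e = .lt) := by
    revert he hegt hegt'
    cases σ e <;> cases σ' e <;> simp
  rcases hcases with ⟨hlt, heq⟩ | ⟨heq, hlt⟩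
  · exact hA ⟨e - 1, (eq_ascAsc_of_lt_of_eq hn hσ' hrest hprev hlt heq).symm⟩
  · exact hA' ⟨e - 1, (eq_ascAsc_of_lt_of_eq hn hσ (fun d hd1 hd2 => (hrest d hd1 hd2).symm)
      hprev.symm hlt heq).symm⟩

/-- Once the `gt` run from `i` wraps around to `i - 1`, both left factors are forced to `true`. -/
theorem leftFactor_two_and_rightFactor (hn : 3 ≤ n) (x : ZMod n → Bool) (i : ZMod n) :
    (leftFactor x i 2 && rightFactor x i (n - 2)) =
      (leftFactor x i 0 && rightFactor x i (n - 2)) := by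
  cases hright : rightFactor x i (n - 2)
  · simp
  obtain ⟨hfactor, hlast⟩ := (rightFactor_eq_true_iff x _ i).mp hright
  have hprev : x (i - 1) = true := by
    rwa [natCast_sub_of_le (by omega),
      show i + -((2 : ℕ) : ZMod n) + 1 = i - 1 by push_cast; ring] at hlast
  have hthird : x (i - 1 - 1) = true → x (i - 1 - 1 - 1) = true := by
    have := hfactor (n - 3) (by omega)
    rwa [natCast_sub_of_le (by omega),
      show i + -((3 : ℕ) : ZMod n) = i - 1 - 1 - 1 by push_cast; ring, sub_add_cancel] at this
  cases h : x (i - 1 - 1) <;> simp [leftFactor, h, hprev, hthird]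

section Flat

variable (hn : 2 ≤ n) (k : ZMod n)
include hn

theorem ascFlat_notMem_range_ascAsc : ascFlat k ∉ Set.range ascAsc := by
  rintro ⟨j, hj⟩
  have := congrFun hj (k + 1)
  simp only [ascAsc, ascFlat, add_one_ne_self hn k, if_false] at this
  split_ifs at this

theorem leftRun_ascFlat_add_two : leftRun (ascFlat k) (k + 2) = 0 :=
  leftRun_eq (by simp) (by simp [ascFlat, show k + 2 - 1 = k + 1 by ring, add_one_ne_self hn k])

theorem rightRun_ascFlat_add_two : rightRun (ascFlat k) (k + 2) = n - 2 := by
  refine rightRun_eq (fun j hj => ?_) ?_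
  · have h1 : k + 2 + j ≠ k := by
      convert add_natCast_ne_self (c := j + 2) (by omega) (by omega) k using 1
      push_cast; ring
    have h2 : k + 2 + j ≠ k + 1 := by
      convert add_natCast_ne_self (c := j + 1) (by omega) (by omega) (k + 1) using 1
      push_cast; ring
    simp [ascFlat, h1, h2]
  · simp [ascFlat, natCast_sub_of_le hn]

end Flat

section TwoAscents

variable (hn : 3 ≤ n) (k : ZMod n)
include hn

theorem ascAsc_mem_feasible : ascAsc k ∈ feasible n :=
  iff_of_true ⟨k, by simp [ascAsc]⟩
    ⟨k + 2, by simp [ascAsc, add_two_ne_self hn, add_two_ne_add_one (by omega) k]⟩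

theorem ascFlat_mem_feasible : ascFlat k ∈ feasible n :=
  iff_of_true ⟨k, by simp [ascFlat]⟩
    ⟨k + 2, by simp [ascFlat, add_two_ne_self hn, add_two_ne_add_one (by omega) k]⟩

theorem ascAsc_injective : Function.Injective (ascAsc (n := n)) := by
  intro k k' h
  have hk := congrFun h k
  have hk' := congrFun h k'
  simp only [ascAsc, true_or, if_true] at hk hk'
  split_ifs at hk hk' with h1 h2
  rcases h1 with h1 | h1
  · exact h1
  rcases h2 with h2 | h2
  · exact h2.symm
  exact absurd (by linear_combination -(h1 + h2)) (add_two_ne_self hn k)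

theorem leftRun_ascAsc_of_ne_add_two (i : ZMod n) (hi : i ≠ k + 2) :
    leftRun (ascAsc k) i = leftRun (ascFlat k) i := by
  have hk := sub_one_ne_self (by omega) k
  have hk' := (add_one_ne_sub_one hn k).symm
  by_cases hi1 : i = k + 1
  · have hrun : ∀ σ : ZMod n → Ordering, σ k = .lt → σ (k - 1) ≠ .lt → leftRun σ i = 1 :=
      fun σ h1 h2 => leftRun_eq (by simpa [hi1]) (by simpa [hi1, sub_sub] using h2)
    rw [hrun _ (by simp [ascAsc]) (by simp [ascAsc, hk, hk']),
      hrun _ (by simp [ascFlat]) (by simp [ascFlat, hk, hk'])]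
  · have h1 : i - 1 ≠ k := fun h => hi1 (by linear_combination h)
    have h2 : i - 1 ≠ k + 1 := fun h => hi (by linear_combination h)
    have hrun : ∀ σ : ZMod n → Ordering, σ (i - 1) ≠ .lt → leftRun σ i = 0 :=
      fun σ h => leftRun_eq (by simp) (by simpa using h)
    rw [hrun _ (by simp [ascAsc, h1, h2]), hrun _ (by simp [ascFlat, h1, h2])]

theorem leftRun_ascAsc_add_two : leftRun (ascAsc k) (k + 2) = 2 := by
  refine leftRun_eq (fun j hj => ?_) ?_
  · interval_cases j
    · simp [ascAsc, show k + 2 - 1 = k + 1 by ring]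
    · simp [ascAsc, show k + 2 - 1 - 1 = k by ring]
  · simp [ascAsc, show k + 2 - 1 - 2 = k - 1 by ring, sub_one_ne_self (by omega) k,
      (add_one_ne_sub_one hn k).symm]

theorem asyncMap_ascAsc : asyncMap (ascAsc k) = asyncMap (ascFlat k) := by
  have hgt : ∀ e, ascAsc k e = .gt ↔ ascFlat k e = .gt := by
    intro e
    unfold ascAsc ascFlat
    split_ifs <;> simp_all
  funext x i
  rw [asyncMap, asyncMap, rightRun_congr hgt]
  by_cases hi : i = k + 2
  · rw [hi, leftRun_ascAsc_add_two hn, leftRun_ascFlat_add_two (by omega),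
      rightRun_ascFlat_add_two (by omega),
      leftFactor_two_and_rightFactor hn]
  · rw [leftRun_ascAsc_of_ne_add_two hn k i hi]

end TwoAscents

theorem image_asyncMap_feasible (hn : 3 ≤ n) :
    asyncMap '' feasible n = asyncMap '' (feasible n \ Set.range ascAsc) := by
  refine (Set.image_mono Set.sdiff_subset).antisymm' ?_
  rintro _ ⟨σ, hσ, rfl⟩
  by_cases hA : σ ∈ Set.range ascAsc
  · obtain ⟨k, rfl⟩ := hA
    exact ⟨ascFlat k, ⟨ascFlat_mem_feasible hn k, ascFlat_notMem_range_ascAsc (by omega) k⟩,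
      (asyncMap_ascAsc hn k).symm⟩
  · exact ⟨σ, ⟨hσ, hA⟩, rfl⟩

theorem ncard_feasible_add [NeZero n] : (feasible n).ncard + 2 ^ (n + 1) = 3 ^ n + 2 := by
  have hcard : Fintype.card Ordering = 3 := rfl
  set noGt : Finset (ZMod n → Ordering) := Fintype.piFinset fun _ => {.gt}ᶜ
  set noLt : Finset (ZMod n → Ordering) := Fintype.piFinset fun _ => {.lt}ᶜ
  have hnoGt : noGt.card = 2 ^ n := by simp [noGt, Finset.card_compl, hcard]
  have hnoLt : noLt.card = 2 ^ n := by simp [noLt, Finset.card_compl, hcard]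
  have hboth : (noGt ∩ noLt).card = 1 := by
    have h : ({.gt}ᶜ ∩ {.lt}ᶜ : Finset Ordering).card = 1 := rfl
    simp [noGt, noLt, ← Fintype.piFinset_inter, h]
  have hfeas : feasible n = ↑((noGt ∩ noLt) ∪ (noGt ∪ noLt)ᶜ) := by
    ext σ
    simp only [feasible, noGt, noLt, Set.mem_ofPred_eq, Finset.coe_union, Finset.coe_inter,
      Finset.coe_compl, Set.mem_union, Set.mem_inter_iff, Set.mem_compl_iff, Finset.mem_coe,
      Fintype.mem_piFinset, Finset.mem_compl, Finset.mem_singleton, ← not_exists]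
    tauto
  have hunion := Finset.card_union_add_card_inter noGt noLt
  have hle := Finset.card_le_univ (noGt ∪ noLt)
  rw [Fintype.card_fun, ZMod.card, hcard] at hle
  rw [hfeas, Set.ncard_coe_finset, Finset.card_union_of_disjoint
    Finset.inter_subset_union.disjoint_compl_right, Finset.card_compl, Fintype.card_fun,
    ZMod.card, hcard, pow_succ]
  omega

theorem ncard_setOf_ecaAsync_add [NeZero n] (hn : 3 ≤ n) :
    {g | ∃ τ : ZMod n → ℕ, g = ecaAsync n rule τ}.ncard + n + 2 ^ (n + 1) = 3 ^ n + 2 := by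
  have hinj : Set.InjOn asyncMap (feasible n \ Set.range ascAsc) :=
    fun σ hσ σ' hσ' h => eq_of_asyncMap_eq hn hσ.1 hσ'.1 hσ.2 hσ'.2 h
  have hsub : Set.range ascAsc ⊆ feasible n := Set.range_subset_iff.mpr (ascAsc_mem_feasible hn)
  have hrange : (Set.range (ascAsc (n := n))).ncard = n := by
    rw [Set.ncard_range_of_injective (ascAsc_injective hn), Nat.card_zmod]
  have hle := Set.ncard_le_ncard hsub
  have hfeas := ncard_feasible_add (n := n)
  rw [setOf_ecaAsync_eq_image, image_asyncMap_feasible hn, hinj.ncard_image, Set.ncard_sdiff hsub]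
  omega

theorem two_pow_succ_add_le_three_pow {m : ℕ} (hm : 3 ≤ m) : 2 ^ (m + 1) + m ≤ 3 ^ m := by
  induction m, hm using Nat.le_induction with
  | base => norm_num
  | succ k _ ih => rw [pow_succ 2 (k + 1), pow_succ 3 k]; omega

end Rule162

/-- Rule 162 (h a b c = (a ∨ ¬b) ∧ c): the number of distinct asynchronous
global functions equals $3^n - 2^{n+1} - n + 2$. -/
theorem rule_162_count (n : ℕ) (hn : 3 ≤ n) :
    {g | ∃ τ : ZMod n → ℕ, g = ecaAsync n (fun a b c => (a || !b) && c) τ}.ncard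
      = 3 ^ n - 2 ^ (n + 1) - n + 2 := by
  have : NeZero n := ⟨by omega⟩
  have hcount : {g | ∃ τ : ZMod n → ℕ, g = ecaAsync n (fun a b c => (a || !b) && c) τ}.ncard
      + n + 2 ^ (n + 1) = 3 ^ n + 2 := Rule162.ncard_setOf_ecaAsync_add hn
  have hpow := Rule162.two_pow_succ_add_le_three_pow hn
  omega
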